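/- Let p be an odd prime and let C be a Cartan subgroup of GL₂(𝔽_p) with normalizer N in GL₂(𝔽_p). Then there exists a non-scalar matrix A ∈ C with trace 0; and every non-scalar A ∈ C with trace 0 satisfies: (a) A² is a scalar matrix; (b) −det(A) is a square in 𝔽_p if and only if C is a split Cartan subgroup; (c) for every g ∈ N, A·g·A⁻¹ = g if g ∈ C and A·g·A⁻¹ = −g if g ∈ N but g ∉ C. -/

import Mathlib

open Matrix

/-- The subgroup of invertible diagonal matrices in `GL₂(𝔽_p)`. -/
def diagGL (p : ℕ) : Subgroup (GL (Fin 2) (ZMod p)) where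
  carrier := {g | ∃ v : Fin 2 → ZMod p,
    (g : Matrix (Fin 2) (Fin 2) (ZMod p)) = Matrix.diagonal v}
  one_mem' := ⟨1, Matrix.diagonal_one.symm⟩
  mul_mem' := by
    rintro g h ⟨v, hv⟩ ⟨w, hw⟩
    exact ⟨v * w, by rw [Units.val_mul, hv, hw, Matrix.diagonal_mul_diagonal]; rfl⟩
  inv_mem' := by
    rintro g ⟨v, hv⟩
    exact ⟨Ring.inverse v, by rw [Matrix.coe_units_inv, hv, Matrix.inv_diagonal]⟩

/-- The subgroup of `GL₂(𝔽_p)` consisting of the units of a subalgebra `A` of the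
`2×2` matrix ring, i.e. the invertible matrices `g` with both `g` and `g⁻¹` in `A`. -/
def unitsIn (p : ℕ) (A : Subalgebra (ZMod p) (Matrix (Fin 2) (Fin 2) (ZMod p))) :
    Subgroup (GL (Fin 2) (ZMod p)) where
  carrier := {g | ((g : GL (Fin 2) (ZMod p)) : Matrix (Fin 2) (Fin 2) (ZMod p)) ∈ A ∧
    ((g⁻¹ : GL (Fin 2) (ZMod p)) : Matrix (Fin 2) (Fin 2) (ZMod p)) ∈ A}
  one_mem' := ⟨A.one_mem, by rw [inv_one]; exact A.one_mem⟩
  mul_mem' := fun {g h} hg hh => ⟨by rw [Units.val_mul]; exact A.mul_mem hg.1 hh.1,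
    by rw [_root_.mul_inv_rev, Units.val_mul]; exact A.mul_mem hh.2 hg.2⟩
  inv_mem' := fun {g} hg => ⟨hg.2, by rw [inv_inv]; exact hg.1⟩

/-- A split Cartan subgroup of `GL₂(𝔽_p)`: a conjugate of the subgroup of invertible
diagonal matrices. -/
def IsSplitCartan (p : ℕ) (C : Subgroup (GL (Fin 2) (ZMod p))) : Prop :=
  ∃ g : GL (Fin 2) (ZMod p), C = Subgroup.map (MulAut.conj g).toMonoidHom (diagGL p)

/-- A non-split Cartan subgroup of `GL₂(𝔽_p)`: the group of units of an
`𝔽_p`-subalgebra of the `2×2` matrix ring which is a field with `p²` elements. -/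
def IsNonsplitCartan (p : ℕ) (C : Subgroup (GL (Fin 2) (ZMod p))) : Prop :=
  ∃ A : Subalgebra (ZMod p) (Matrix (Fin 2) (Fin 2) (ZMod p)),
    IsField A ∧ Nat.card A = p ^ 2 ∧ C = unitsIn p A

/-- A Cartan subgroup of `GL₂(𝔽_p)` is a split or non-split Cartan subgroup. -/
def IsCartan (p : ℕ) (C : Subgroup (GL (Fin 2) (ZMod p))) : Prop :=
  IsSplitCartan p C ∨ IsNonsplitCartan p C

/-!
Everything commuting with a non-scalar `2 × 2` matrix `A` has the form `x + y A`; hence a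
Cartan subgroup `C` is the centralizer of each of its non-scalar elements. If `g` normalizes
`C` and `tr A = 0`, then `g A g⁻¹ = x + y A` has trace `0` and determinant `det A`, which forces
`x = 0` and `y = ±1`, the sign `+` occurring exactly when `g ∈ C`. By Cayley–Hamilton
`A² = -det A`, so `-det A = s²` gives `(A - s)(A + s) = 0`: impossible in the field of a
non-split Cartan, while in the split case `A` is conjugate to `diag(a, -a)`.
-/

namespace Matrix

variable {F : Type*} [Field F]

theorem mul_self_eq_neg_det_smul_one_of_trace_eq_zero {R : Type*} [CommRing R]
    {A : Matrix (Fin 2) (Fin 2) R} (htr : A.trace = 0) : A * A = (-A.det) • 1 := by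
  have h11 : A 1 1 = -A 0 0 := by rw [trace_fin_two] at htr; linear_combination htr
  ext i j
  fin_cases i <;> fin_cases j <;>
    simp only [Fin.isValue, Fin.zero_eta, Fin.mk_one, mul_apply, Fin.sum_univ_two, det_fin_two, h11,
      smul_apply, one_apply_eq, one_apply_ne zero_ne_one, one_apply_ne one_ne_zero, smul_eq_mul] <;>
    ring

theorem exists_eq_smul_one_add_smul_of_commute_of_apply_zero_one_ne_zero
    {A B : Matrix (Fin 2) (Fin 2) F} (hA : A 0 1 ≠ 0) (hAB : Commute B A) :
    ∃ x y : F, B = x • 1 + y • A := by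
  have e (i j : Fin 2) := congrFun₂ hAB.eq i j
  simp only [mul_apply, Fin.sum_univ_two] at e
  refine ⟨B 0 0 - B 0 1 / A 0 1 * A 0 0, B 0 1 / A 0 1, ?_⟩
  ext i j
  fin_cases i <;> fin_cases j <;>
    simp only [Fin.isValue, Fin.zero_eta, Fin.mk_one, add_apply, smul_apply, one_apply_eq,
      one_apply_ne zero_ne_one, one_apply_ne one_ne_zero, smul_eq_mul, mul_one, mul_zero, zero_add,
      sub_add_cancel] <;>
    field_simp
  · linear_combination -e 0 0
  · linear_combination -e 0 1

theorem exists_eq_smul_one_add_smul_of_commute {A B : Matrix (Fin 2) (Fin 2) F}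
    (hA : ¬ ∃ c : F, A = c • 1) (hAB : Commute B A) : ∃ x y : F, B = x • 1 + y • A := by
  by_cases h01 : A 0 1 ≠ 0
  · exact exists_eq_smul_one_add_smul_of_commute_of_apply_zero_one_ne_zero h01 hAB
  by_cases h10 : A 1 0 ≠ 0
  · obtain ⟨x, y, h⟩ := exists_eq_smul_one_add_smul_of_commute_of_apply_zero_one_ne_zero
      (A := Aᵀ) (B := Bᵀ) h10 (by simpa [Commute, SemiconjBy, ← transpose_mul] using hAB.symm)
    exact ⟨x, y, by simpa using congrArg transpose h⟩
  push Not at h01 h10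
  have hd : A 0 0 - A 1 1 ≠ 0 := by
    refine sub_ne_zero.2 fun h => hA ⟨A 0 0, ?_⟩
    ext i j
    fin_cases i <;> fin_cases j <;> simp [h01, h10, h]
  have e (i j : Fin 2) := congrFun₂ hAB.eq i j
  simp only [mul_apply, Fin.sum_univ_two] at e
  refine ⟨B 0 0 - (B 0 0 - B 1 1) / (A 0 0 - A 1 1) * A 0 0,
    (B 0 0 - B 1 1) / (A 0 0 - A 1 1), ?_⟩
  ext i j
  fin_cases i <;> fin_cases j <;>
    simp only [Fin.isValue, Fin.zero_eta, Fin.mk_one, add_apply, smul_apply, one_apply_eq,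
      one_apply_ne zero_ne_one, one_apply_ne one_ne_zero, smul_eq_mul, mul_one, mul_zero, add_zero,
      sub_add_cancel, h01, h10]
  · refine (mul_eq_zero.1 ?_).resolve_left hd
    linear_combination -e 0 1 + (B 0 0 - B 1 1) * h01
  · refine (mul_eq_zero.1 ?_).resolve_left hd
    linear_combination e 1 0 + (B 0 0 - B 1 1) * h10
  · field_simp
    ring

theorem not_exists_eq_smul_one_of_trace_eq_zero (h2 : (2 : F) ≠ 0)
    {A : Matrix (Fin 2) (Fin 2) F} (hA : A ≠ 0) (htr : A.trace = 0) :
    ¬ ∃ c : F, A = c • 1 := by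
  rintro ⟨c, rfl⟩
  have hc : c = 0 := by simpa [h2] using htr
  exact hA (by rw [hc, zero_smul])

theorem eq_or_eq_neg_of_commute (h2 : (2 : F) ≠ 0) {A B : Matrix (Fin 2) (Fin 2) F}
    (hA : A.det ≠ 0) (hAtr : A.trace = 0) (hBA : Commute B A) (hBtr : B.trace = 0)
    (hdet : B.det = A.det) : B = A ∨ B = -A := by
  have hA0 : A ≠ 0 := fun h => hA (by simp [h])
  obtain ⟨x, y, rfl⟩ := exists_eq_smul_one_add_smul_of_commute
    (not_exists_eq_smul_one_of_trace_eq_zero h2 hA0 hAtr) hBA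
  have hx : x = 0 := by simpa [hAtr, h2] using hBtr
  have hy : y ^ 2 = 1 := by simpa [hx, det_smul, hA] using hdet
  rcases sq_eq_one_iff.1 hy with rfl | rfl
  · left; simp [hx]
  · right; simp [hx]

end Matrix

theorem Subgroup.map_equiv_centralizer_singleton {G G' : Type*} [Group G] [Group G']
    (e : G ≃* G') (a : G) :
    (Subgroup.centralizer {a}).map e.toMonoidHom = Subgroup.centralizer {e a} := by
  ext g
  rw [Subgroup.mem_map_equiv, Subgroup.mem_centralizer_singleton_iff,
    Subgroup.mem_centralizer_singleton_iff, ← e.injective.eq_iff, map_mul, map_mul,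
    MulEquiv.apply_symm_apply]

namespace Matrix.GeneralLinearGroup

variable {F : Type*} [Field F]

theorem mul_mul_inv_eq_neg_of_mem_normalizer_centralizer (h2 : (2 : F) ≠ 0)
    {A g : GL (Fin 2) F} (htr : (A : Matrix (Fin 2) (Fin 2) F).trace = 0)
    (hg : g ∈ Subgroup.normalizer (Subgroup.centralizer {A} : Set (GL (Fin 2) F)))
    (hgA : g ∉ Subgroup.centralizer {A}) : A * g * A⁻¹ = -g := by
  have hconj : g * A * g⁻¹ ∈ Subgroup.centralizer {A} :=
    (Subgroup.mem_normalizer_iff.1 hg A).1 (Subgroup.mem_centralizer_singleton_iff.2 rfl)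
  rcases eq_or_eq_neg_of_commute h2 (A := A) (B := ↑(g * A * g⁻¹))
    ((isUnit_iff_isUnit_det _).1 A.isUnit).ne_zero htr
    (Commute.units_val (Subgroup.mem_centralizer_singleton_iff.1 hconj))
    (by rw [Units.val_mul, Units.val_mul, trace_units_conj, htr])
    (by rw [Units.val_mul, Units.val_mul, det_units_conj]) with h | h
  · exact absurd (Subgroup.mem_centralizer_singleton_iff.2
      (mul_inv_eq_iff_eq_mul.1 (Units.ext h))) hgA
  · have hgA : g * A = -A * g := mul_inv_eq_iff_eq_mul.1 (Units.ext (by rw [h, Units.val_neg]))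
    rw [mul_inv_eq_iff_eq_mul, neg_mul, ← neg_eq_iff_eq_neg, ← neg_mul, ← hgA]

end Matrix.GeneralLinearGroup

section Cartan

variable {p : ℕ} [Fact p.Prime]

theorem ZMod.two_ne_zero_of_odd (hp : Odd p) : (2 : ZMod p) ≠ 0 :=
  Ring.two_ne_zero <| by
    rw [ZMod.ringChar_zmod_n]
    rintro rfl
    exact Nat.not_odd_iff_even.2 even_two hp

theorem diagGL_eq_centralizer {D : GL (Fin 2) (ZMod p)} (hD : D ∈ diagGL p)
    (hns : ¬ ∃ c : ZMod p, (D : Matrix (Fin 2) (Fin 2) (ZMod p)) = c • 1) :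
    diagGL p = Subgroup.centralizer {D} := by
  obtain ⟨v, hv⟩ := hD
  ext g
  rw [Subgroup.mem_centralizer_singleton_iff, Units.ext_iff, Units.val_mul, Units.val_mul, hv]
  constructor
  · rintro ⟨w, hw⟩
    rw [hw, diagonal_mul_diagonal, diagonal_mul_diagonal]
    simp_rw [mul_comm]
  · intro hg
    obtain ⟨x, y, hxy⟩ := exists_eq_smul_one_add_smul_of_commute (hv ▸ hns) hg
    exact ⟨x • 1 + y • v, by
      rw [hxy, ← diagonal_one', ← diagonal_smul, ← diagonal_smul, diagonal_add]; rfl⟩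

namespace IsSplitCartan

variable {C : Subgroup (GL (Fin 2) (ZMod p))} {A : GL (Fin 2) (ZMod p)}

theorem eq_centralizer (hC : IsSplitCartan p C) (hA : A ∈ C)
    (hns : ¬ ∃ c : ZMod p, (A : Matrix (Fin 2) (Fin 2) (ZMod p)) = c • 1) :
    C = Subgroup.centralizer {A} := by
  obtain ⟨h, rfl⟩ := hC
  rw [Subgroup.mem_map_equiv] at hA
  have hns' : ¬ ∃ c : ZMod p, (((MulAut.conj h).symm A : GL (Fin 2) (ZMod p)) :
      Matrix (Fin 2) (Fin 2) (ZMod p)) = c • 1 := by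
    rintro ⟨c, hc⟩
    refine hns ⟨c, ?_⟩
    rw [← (MulAut.conj h).apply_symm_apply A, MulAut.conj_apply, Units.val_mul, Units.val_mul, hc,
      mul_smul_comm, mul_one, smul_mul_assoc, Units.mul_inv]
  rw [diagGL_eq_centralizer hA hns', Subgroup.map_equiv_centralizer_singleton,
    MulEquiv.apply_symm_apply]

theorem isSquare_neg_det (hC : IsSplitCartan p C) (hA : A ∈ C)
    (htr : (A : Matrix (Fin 2) (Fin 2) (ZMod p)).trace = 0) :
    IsSquare (-(A : Matrix (Fin 2) (Fin 2) (ZMod p)).det) := by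
  obtain ⟨h, rfl⟩ := hC
  obtain ⟨v, hv⟩ := Subgroup.mem_map_equiv.1 hA
  rw [MulAut.conj_symm_apply, Units.val_mul, Units.val_mul] at hv
  have hv1 : v 0 + v 1 = 0 := by
    have htr' : (diagonal v).trace = 0 := by rw [← hv, trace_units_conj', htr]
    simpa [trace_diagonal, Fin.sum_univ_two] using htr'
  refine ⟨v 0, ?_⟩
  rw [← det_units_conj' h, hv, det_diagonal, Fin.prod_univ_two]
  linear_combination -v 0 * hv1

theorem exists_trace_eq_zero (hC : IsSplitCartan p C) :
    ∃ A ∈ C, (A : Matrix (Fin 2) (Fin 2) (ZMod p)).trace = 0 := by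
  obtain ⟨h, rfl⟩ := hC
  have hE : diagonal ![(1 : ZMod p), -1] * diagonal ![1, -1] = 1 := by
    rw [diagonal_mul_diagonal, ← diagonal_one']
    congr 1
    ext i
    fin_cases i <;> simp
  refine ⟨MulAut.conj h ⟨_, _, hE, hE⟩, Subgroup.mem_map_of_mem _ ⟨_, rfl⟩, ?_⟩
  rw [MulAut.conj_apply, Units.val_mul, Units.val_mul, trace_units_conj]
  simp [trace_diagonal]

end IsSplitCartan

theorem unitsIn_eq_centralizer {K : Subalgebra (ZMod p) (Matrix (Fin 2) (Fin 2) (ZMod p))}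
    (hK : ∀ x ∈ K, ∀ y ∈ K, Commute x y) {A : GL (Fin 2) (ZMod p)} (hA : A ∈ unitsIn p K)
    (hns : ¬ ∃ c : ZMod p, (A : Matrix (Fin 2) (Fin 2) (ZMod p)) = c • 1) :
    unitsIn p K = Subgroup.centralizer {A} := by
  have hmem (g : GL (Fin 2) (ZMod p)) (hg : g ∈ Subgroup.centralizer {A}) :
      (g : Matrix (Fin 2) (Fin 2) (ZMod p)) ∈ K := by
    obtain ⟨x, y, hxy⟩ := exists_eq_smul_one_add_smul_of_commute hns
      (Commute.units_val (Subgroup.mem_centralizer_singleton_iff.1 hg))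
    rw [hxy]
    exact K.add_mem (K.smul_mem K.one_mem x) (K.smul_mem hA.1 y)
  ext g
  exact ⟨fun hg => Subgroup.mem_centralizer_singleton_iff.2 (Units.ext (hK _ hg.1 _ hA.1).eq),
    fun hg => ⟨hmem g hg, hmem g⁻¹ (inv_mem hg)⟩⟩

namespace IsNonsplitCartan

variable {C : Subgroup (GL (Fin 2) (ZMod p))} {A : GL (Fin 2) (ZMod p)}

theorem eq_centralizer (hC : IsNonsplitCartan p C) (hA : A ∈ C)
    (hns : ¬ ∃ c : ZMod p, (A : Matrix (Fin 2) (Fin 2) (ZMod p)) = c • 1) :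
    C = Subgroup.centralizer {A} := by
  obtain ⟨K, hK, -, rfl⟩ := hC
  exact unitsIn_eq_centralizer
    (fun x hx y hy => congrArg Subtype.val (hK.mul_comm ⟨x, hx⟩ ⟨y, hy⟩)) hA hns

theorem not_isSquare_neg_det (hC : IsNonsplitCartan p C) (hA : A ∈ C)
    (hns : ¬ ∃ c : ZMod p, (A : Matrix (Fin 2) (Fin 2) (ZMod p)) = c • 1)
    (htr : (A : Matrix (Fin 2) (Fin 2) (ZMod p)).trace = 0) :
    ¬ IsSquare (-(A : Matrix (Fin 2) (Fin 2) (ZMod p)).det) := by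
  obtain ⟨K, hK, -, rfl⟩ := hC
  rintro ⟨s, hs⟩
  let _ : Field K := hK.toField
  have hsq :
      (⟨A, hA.1⟩ : K) * ⟨A, hA.1⟩ = algebraMap (ZMod p) K s * algebraMap (ZMod p) K s :=
    Subtype.ext (by
      simp [mul_self_eq_neg_det_smul_one_of_trace_eq_zero htr, hs, Algebra.algebraMap_eq_smul_one,
        smul_smul])
  rcases mul_self_eq_mul_self_iff.1 hsq with h | h
  · exact hns ⟨s, by simpa [Algebra.algebraMap_eq_smul_one] using congrArg Subtype.val h⟩
  · exact hns ⟨-s, by simpa [Algebra.algebraMap_eq_smul_one] using congrArg Subtype.val h⟩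

theorem exists_trace_eq_zero (h2 : (2 : ZMod p) ≠ 0) (hC : IsNonsplitCartan p C) :
    ∃ A ∈ C, (A : Matrix (Fin 2) (Fin 2) (ZMod p)).trace = 0 := by
  obtain ⟨K, hK, hcard, rfl⟩ := hC
  obtain ⟨x, hxK, hx⟩ : ∃ x ∈ K, ¬ ∃ c : ZMod p, x = c • 1 := by
    by_contra! hall
    have hsurj : Function.Surjective (algebraMap (ZMod p) K) := fun ⟨x, hx⟩ =>
      let ⟨c, hc⟩ := hall x hx
      ⟨c, Subtype.ext (by simp [hc, Algebra.algebraMap_eq_smul_one])⟩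
    have hle := Nat.card_le_card_of_surjective _ hsurj
    rw [hcard, Nat.card_zmod] at hle
    nlinarith [(Fact.out : p.Prime).two_le]
  set B := x - (x.trace / 2) • 1 with hB
  have hBK : B ∈ K := K.sub_mem hxK (K.smul_mem K.one_mem _)
  have hB0 : B ≠ 0 := fun h => hx ⟨x.trace / 2, sub_eq_zero.1 h⟩
  obtain ⟨y, hy⟩ := hK.mul_inv_cancel (a := ⟨B, hBK⟩) fun h => hB0 (congrArg Subtype.val h)
  have hBy : B * y = 1 := congrArg Subtype.val hy
  refine ⟨⟨B, y, hBy, mul_eq_one_comm.1 hBy⟩, ⟨hBK, y.2⟩, ?_⟩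
  change B.trace = 0
  rw [hB, trace_sub, trace_smul, trace_one, Fintype.card_fin, smul_eq_mul]
  field_simp
  ring

end IsNonsplitCartan

namespace IsCartan

variable {C : Subgroup (GL (Fin 2) (ZMod p))} {A : GL (Fin 2) (ZMod p)}

theorem eq_centralizer (hC : IsCartan p C) (hA : A ∈ C)
    (hns : ¬ ∃ c : ZMod p, (A : Matrix (Fin 2) (Fin 2) (ZMod p)) = c • 1) :
    C = Subgroup.centralizer {A} :=
  hC.elim (·.eq_centralizer hA hns) (·.eq_centralizer hA hns)

theorem exists_trace_eq_zero (h2 : (2 : ZMod p) ≠ 0) (hC : IsCartan p C) :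
    ∃ A ∈ C, (A : Matrix (Fin 2) (Fin 2) (ZMod p)).trace = 0 :=
  hC.elim (·.exists_trace_eq_zero) (·.exists_trace_eq_zero h2)

theorem isSquare_neg_det_iff (hC : IsCartan p C) (hA : A ∈ C)
    (hns : ¬ ∃ c : ZMod p, (A : Matrix (Fin 2) (Fin 2) (ZMod p)) = c • 1)
    (htr : (A : Matrix (Fin 2) (Fin 2) (ZMod p)).trace = 0) :
    IsSquare (-(A : Matrix (Fin 2) (Fin 2) (ZMod p)).det) ↔ IsSplitCartan p C :=
  hC.elim (fun hs => iff_of_true (hs.isSquare_neg_det hA htr) hs) fun hn =>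
    iff_of_false (hn.not_isSquare_neg_det hA hns htr) fun hs =>
      hn.not_isSquare_neg_det hA hns htr (hs.isSquare_neg_det hA htr)

end IsCartan

end Cartan

theorem cartan_trace_zero_element (p : ℕ) [Fact p.Prime] (hp : Odd p)
    (C : Subgroup (GL (Fin 2) (ZMod p))) (hC : IsCartan p C) :
    (∃ A ∈ C, (¬ ∃ c : ZMod p, (A : Matrix (Fin 2) (Fin 2) (ZMod p)) = c • 1) ∧
      Matrix.trace (A : Matrix (Fin 2) (Fin 2) (ZMod p)) = 0) ∧
    ∀ A : GL (Fin 2) (ZMod p), A ∈ C →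
      (¬ ∃ c : ZMod p, (A : Matrix (Fin 2) (Fin 2) (ZMod p)) = c • 1) →
      Matrix.trace (A : Matrix (Fin 2) (Fin 2) (ZMod p)) = 0 →
      ((∃ c : ZMod p, ((A ^ 2 : GL (Fin 2) (ZMod p)) : Matrix (Fin 2) (Fin 2) (ZMod p)) = c • 1) ∧
        (IsSquare (-(A : Matrix (Fin 2) (Fin 2) (ZMod p)).det) ↔ IsSplitCartan p C) ∧
        ∀ g ∈ Subgroup.normalizer (C : Set (GL (Fin 2) (ZMod p))), (g ∈ C → A * g * A⁻¹ = g) ∧ (g ∉ C → A * g * A⁻¹ = -g)) := by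
  have h2 := ZMod.two_ne_zero_of_odd hp
  obtain ⟨A₀, hA₀, htr₀⟩ := hC.exists_trace_eq_zero h2
  refine ⟨⟨A₀, hA₀, not_exists_eq_smul_one_of_trace_eq_zero h2 A₀.ne_zero htr₀, htr₀⟩,
    fun A hA hns htr => ⟨⟨-(A : Matrix (Fin 2) (Fin 2) (ZMod p)).det, ?_⟩,
      hC.isSquare_neg_det_iff hA hns htr, fun g hg => ?_⟩⟩
  · rw [Units.val_pow_eq_pow_val, sq, mul_self_eq_neg_det_smul_one_of_trace_eq_zero htr]
  · have hCA := hC.eq_centralizer hA hns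
    subst hCA
    exact ⟨fun hgA => mul_inv_eq_iff_eq_mul.2 (Subgroup.mem_centralizer_singleton_iff.1 hgA).symm,
      GeneralLinearGroup.mul_mul_inv_eq_neg_of_mem_normalizer_centralizer h2 htr hg⟩
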